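/- Let d ≥ 1 and let f : ℝ^d → ℝ be differentiable, L'-Lipschitz, and with M-Lipschitz gradient, where 0 < L' < L and M > 0. Let x_0 ∈ ℝ^d satisfy f(x_0) < 0 and suppose −f(x_0) ≤ L(L − L')/(4M). Let ν satisfy 0 < ν ≤ (−f(x_0))/(√d · L). Then the Lipschitz-based local feasible set T = {x ∈ ℝ^d : ‖x − x_0‖ ≤ −f(x_0)/L} is contained in the quadratic local feasible set S = {x ∈ ℝ^d : f(x_0) + ⟨∇^ν f(x_0), x − x_0⟩ + 2M‖x − x_0‖² ≤ 0}; i.e., when the current point is sufficiently close to the constraint boundary, the quadratic construction is less conservative than the Lipschitz-ball construction. -/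

import Mathlib

open scoped BigOperators

/-- The finite-difference gradient estimator
`∇^ν f(x) = ∑_{j=1}^d ((f(x + ν e_j) − f(x))/ν) e_j`. -/
noncomputable def fdGrad {d : ℕ} (f : EuclideanSpace ℝ (Fin d) → ℝ) (ν : ℝ)
    (x : EuclideanSpace ℝ (Fin d)) : EuclideanSpace ℝ (Fin d) :=
  ∑ j : Fin d, ((f (x + ν • EuclideanSpace.single j (1 : ℝ)) - f x) / ν) •
    EuclideanSpace.single j (1 : ℝ)

/-!
Write `r = -f(x₀)/L` and `h = x - x₀` with `‖h‖ ≤ r`. Each coordinate of `∇^ν f(x₀)` is a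
difference quotient of `f` along `e_j`, so by the mean value inequality it is within `Mν` of
the corresponding coordinate of `∇f(x₀)`; hence `‖∇^ν f(x₀) - ∇f(x₀)‖ ≤ √d M ν ≤ M r`.
Since `‖∇f(x₀)‖ ≤ L'`, the quadratic model at `x` is at most
`-L r + (L' + M r) ‖h‖ + 2 M ‖h‖² ≤ -L r + (L' + 3 M r) r`, and the closeness assumption
`4 M r ≤ L - L'` makes this nonpositive.
-/

open InnerProductSpace
open scoped RealInnerProductSpace

section Gradient

variable {F : Type*} [NormedAddCommGroup F] [InnerProductSpace ℝ F] [CompleteSpace F]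
  {f : F → ℝ}

theorem norm_fderiv_sub_fderiv_eq (f : F → ℝ) (x y : F) :
    ‖fderiv ℝ f x - fderiv ℝ f y‖ = ‖gradient f x - gradient f y‖ := by
  rw [← toDual_gradient, ← toDual_gradient, ← map_sub, LinearIsometryEquiv.norm_map]

theorem norm_gradient_le_of_abs_sub_le {C : ℝ} (hC : 0 ≤ C)
    (hf : ∀ x y, |f x - f y| ≤ C * ‖x - y‖) (x : F) : ‖gradient f x‖ ≤ C := by
  rw [← (toDual ℝ F).norm_map, toDual_gradient]
  exact norm_fderiv_le_of_lip' ℝ hC (Filter.Eventually.of_forall fun y => hf y x)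

theorem abs_sub_sub_inner_gradient_le (hf : Differentiable ℝ f) {M : ℝ} (hM : 0 ≤ M)
    (hgrad : ∀ x y, ‖gradient f x - gradient f y‖ ≤ M * ‖x - y‖) (x v : F) :
    |f (x + v) - f x - ⟪gradient f x, v⟫| ≤ M * ‖v‖ ^ 2 := by
  have hbound : ∀ z ∈ Metric.closedBall x ‖v‖, ‖fderiv ℝ f z - fderiv ℝ f x‖ ≤ M * ‖v‖ := by
    intro z hz
    rw [norm_fderiv_sub_fderiv_eq]
    exact (hgrad z x).trans (mul_le_mul_of_nonneg_left (mem_closedBall_iff_norm.mp hz) hM)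
  have hmvt := (convex_closedBall x ‖v‖).norm_image_sub_le_of_norm_fderiv_le'
    (fun z _ => hf z) hbound (Metric.mem_closedBall_self (norm_nonneg v))
    (by simp : x + v ∈ Metric.closedBall x ‖v‖)
  rw [add_sub_cancel_left, ← inner_gradient_left, Real.norm_eq_abs] at hmvt
  rwa [sq, ← mul_assoc]

end Gradient

theorem EuclideanSpace.norm_le_sqrt_card_mul {ι : Type*} [Fintype ι]
    (x : EuclideanSpace ℝ ι) {c : ℝ} (hc0 : 0 ≤ c) (hc : ∀ i, |x i| ≤ c) :
    ‖x‖ ≤ √(Fintype.card ι) * c := by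
  calc ‖x‖ = √(∑ i, |x i| ^ 2) := by simp [EuclideanSpace.norm_eq]
    _ ≤ √(∑ _i : ι, c ^ 2) := by gcongr with i; exact hc i
    _ = √(Fintype.card ι) * c := by simp [Real.sqrt_mul, Real.sqrt_sq hc0]

section FiniteDifference

variable {d : ℕ} {f : EuclideanSpace ℝ (Fin d) → ℝ}

theorem fdGrad_apply (f : EuclideanSpace ℝ (Fin d) → ℝ) (ν : ℝ) (x : EuclideanSpace ℝ (Fin d))
    (j : Fin d) : fdGrad f ν x j = (f (x + ν • EuclideanSpace.single j 1) - f x) / ν := by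
  simp [fdGrad, Pi.single_apply]

theorem abs_fdGrad_apply_sub_gradient_le (hf : Differentiable ℝ f) {M : ℝ} (hM : 0 ≤ M)
    (hgrad : ∀ x y, ‖gradient f x - gradient f y‖ ≤ M * ‖x - y‖)
    {ν : ℝ} (hν : 0 < ν) (x : EuclideanSpace ℝ (Fin d)) (j : Fin d) :
    |fdGrad f ν x j - gradient f x j| ≤ M * ν := by
  have htaylor := abs_sub_sub_inner_gradient_le hf hM hgrad x (ν • EuclideanSpace.single j 1)
  rw [inner_smul_right, EuclideanSpace.inner_single_right, norm_smul,
    PiLp.norm_single, Real.norm_of_nonneg hν.le, norm_one, mul_one, one_mul, conj_trivial,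
    sq, ← mul_assoc] at htaylor
  rwa [fdGrad_apply, div_sub' hν.ne', abs_div, abs_of_pos hν, div_le_iff₀ hν]

theorem norm_fdGrad_sub_gradient_le (hf : Differentiable ℝ f) {M : ℝ} (hM : 0 ≤ M)
    (hgrad : ∀ x y, ‖gradient f x - gradient f y‖ ≤ M * ‖x - y‖)
    {ν : ℝ} (hν : 0 < ν) (x : EuclideanSpace ℝ (Fin d)) :
    ‖fdGrad f ν x - gradient f x‖ ≤ √d * (M * ν) := by
  simpa using EuclideanSpace.norm_le_sqrt_card_mul (fdGrad f ν x - gradient f x)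
    (by positivity) fun j => by
      simpa only [PiLp.sub_apply] using abs_fdGrad_apply_sub_gradient_le hf hM hgrad hν x j

end FiniteDifference

theorem stmt4_general {d : ℕ} (L L' M : ℝ)
    (hL' : 0 < L') (hL'L : L' < L) (hM : 0 < M)
    (f : EuclideanSpace ℝ (Fin d) → ℝ) (hf : Differentiable ℝ f)
    (hlip : ∀ x y : EuclideanSpace ℝ (Fin d), |f x - f y| ≤ L' * ‖x - y‖)
    (hglip : ∀ x y : EuclideanSpace ℝ (Fin d),
      ‖gradient f x - gradient f y‖ ≤ M * ‖x - y‖)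
    (x0 : EuclideanSpace ℝ (Fin d)) (hx0 : f x0 < 0)
    (hclose : -(f x0) ≤ L * (L - L') / (4 * M))
    (ν : ℝ) (hν0 : 0 < ν) (hν : ν ≤ -(f x0) / (Real.sqrt d * L)) :
    {x : EuclideanSpace ℝ (Fin d) | ‖x - x0‖ ≤ -(f x0) / L} ⊆
      {x : EuclideanSpace ℝ (Fin d) |
        f x0 + (inner ℝ (fdGrad f ν x0) (x - x0) : ℝ) + 2 * M * ‖x - x0‖ ^ 2 ≤ 0} := by
  intro x (hx : ‖x - x0‖ ≤ -(f x0) / L)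
  have hL : 0 < L := hL'.trans hL'L
  set r := -(f x0) / L
  have hr : 0 ≤ r := div_nonneg (by linarith) hL.le
  have hfx0 : f x0 = -(L * r) := by rw [mul_div_cancel₀ _ hL.ne', neg_neg]
  have hMr : 4 * M * r ≤ L - L' := by
    rw [le_div_iff₀ (by positivity), hfx0] at hclose
    nlinarith
  have hνr : √d * ν ≤ r :=
    calc √d * ν ≤ √d * (-(f x0) / (√d * L)) := by gcongr
      _ = √d / √d * r := by simp only [r]; rw [← mul_div_mul_comm, mul_div_assoc]
      _ ≤ r := mul_le_of_le_one_left hr (div_self_le_one _)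
  have hfd : ‖fdGrad f ν x0‖ ≤ L' + M * r := by
    calc ‖fdGrad f ν x0‖ ≤ ‖gradient f x0‖ + ‖fdGrad f ν x0 - gradient f x0‖ :=
          norm_le_norm_add_norm_sub' _ _
      _ ≤ L' + √d * (M * ν) := add_le_add (norm_gradient_le_of_abs_sub_le hL'.le hlip x0)
          (norm_fdGrad_sub_gradient_le hf hM.le hglip hν0 x0)
      _ ≤ L' + M * r := by rw [mul_left_comm]; gcongr
  calc f x0 + ⟪fdGrad f ν x0, x - x0⟫ + 2 * M * ‖x - x0‖ ^ 2
      ≤ -(L * r) + (L' + M * r) * ‖x - x0‖ + 2 * M * (r * ‖x - x0‖) := by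
        gcongr
        · exact hfx0.le
        · exact (real_inner_le_norm _ _).trans (by gcongr)
        · rw [sq]; exact mul_le_mul_of_nonneg_right hx (norm_nonneg _)
    _ = -(L * r) + (L' + 3 * M * r) * ‖x - x0‖ := by ring
    _ ≤ -(L * r) + (L' + 3 * M * r) * r := by gcongr
    _ ≤ 0 := by nlinarith

/-- Near the boundary, the Lipschitz-ball local feasible set `T` is contained
in the quadratic local feasible set `S` built from the finite-difference
gradient estimate. -/
theorem stmt4 {d : ℕ} (hd : 1 ≤ d) (L L' M : ℝ)
    (hL' : 0 < L') (hL'L : L' < L) (hM : 0 < M)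
    (f : EuclideanSpace ℝ (Fin d) → ℝ) (hf : Differentiable ℝ f)
    (hlip : ∀ x y : EuclideanSpace ℝ (Fin d), |f x - f y| ≤ L' * ‖x - y‖)
    (hglip : ∀ x y : EuclideanSpace ℝ (Fin d),
      ‖gradient f x - gradient f y‖ ≤ M * ‖x - y‖)
    (x0 : EuclideanSpace ℝ (Fin d)) (hx0 : f x0 < 0)
    (hclose : -(f x0) ≤ L * (L - L') / (4 * M))
    (ν : ℝ) (hν0 : 0 < ν) (hν : ν ≤ -(f x0) / (Real.sqrt d * L)) :
    {x : EuclideanSpace ℝ (Fin d) | ‖x - x0‖ ≤ -(f x0) / L} ⊆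
      {x : EuclideanSpace ℝ (Fin d) |
        f x0 + (inner ℝ (fdGrad f ν x0) (x - x0) : ℝ) + 2 * M * ‖x - x0‖ ^ 2 ≤ 0} :=
  stmt4_general L L' M hL' hL'L hM f hf hlip hglip x0 hx0 hclose ν hν0 hν
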